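/- arXiv:2006.15522 — 4 statements merged into one kernel-verified Lean document; each statement's English description precedes it below -/
import Mathlib

section
/- Under the ERM setting, for each i, E_S[I[f_{S_i}]] - inf_{f∈H} I[f] ≤ E_S[V(f_{S_i}, z_i) - V(f_S, z_i)], where S_i is the training set S with the i-th point removed. That is, the expected excess risk of the leave-one-out ERM solution is bounded by the expected CV_loo stability. -/
/-!
Because `f_{S_i}` does not depend on `z_i` and `z_i` is a fresh independent sample, replacing
`z_i` by an independent `z` shows `E_S[I[f_{S_i}]] = E_S[V(f_{S_i}, z_i)]`. Because `f_S` is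
invariant under permuting the sample, `E_S[V(f_S, z_j)]` is the same for every `j`, so it equals
`E_S[I_S[f_S]] ≤ E_S[I_S[f]] = I[f]` for every `f`, hence is at most `inf_f I[f]`.
-/

open MeasureTheory

section IIDSample

variable {ι Z : Type*} [Fintype ι] [MeasurableSpace Z] {μ : Measure Z}

theorem measurePreserving_arrowCongr'_perm [SigmaFinite μ] (σ : Equiv.Perm ι) :
    MeasurePreserving (MeasurableEquiv.arrowCongr' σ.symm (.refl Z))
      (Measure.pi fun _ => μ) (Measure.pi fun _ => μ) :=
  measurePreserving_arrowCongr' _ _ σ.symm (.refl Z) fun _ => .id μ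

theorem integral_comp_perm [SigmaFinite μ] (σ : Equiv.Perm ι) (G : (ι → Z) → ℝ) :
    ∫ S, G (S ∘ σ) ∂Measure.pi (fun _ => μ) = ∫ S, G S ∂Measure.pi (fun _ => μ) :=
  (measurePreserving_arrowCongr'_perm σ).integral_comp' G

theorem integrable_comp_perm_iff [SigmaFinite μ] (σ : Equiv.Perm ι) {G : (ι → Z) → ℝ} :
    Integrable (fun S => G (S ∘ σ)) (Measure.pi fun _ => μ) ↔
      Integrable G (Measure.pi fun _ => μ) :=
  (measurePreserving_arrowCongr'_perm σ).integrable_comp_emb (MeasurableEquiv.measurableEmbedding _)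

theorem measurePreserving_update_prod [DecidableEq ι] [IsProbabilityMeasure μ] (i : ι) :
    MeasurePreserving (fun p : (ι → Z) × Z => Function.update p.1 i p.2)
      ((Measure.pi fun _ => μ).prod μ) (Measure.pi fun _ => μ) := by
  refine ⟨by fun_prop, (Measure.pi_eq fun s hs => ?_).symm⟩
  have hpre : (fun p : (ι → Z) × Z => Function.update p.1 i p.2) ⁻¹' Set.univ.pi s
      = Set.univ.pi (Function.update s i Set.univ) ×ˢ s i := by
    ext ⟨S, z⟩
    simp only [Set.mem_preimage, Set.mem_univ_pi, Set.mem_prod, Function.forall_update_iff]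
    rw [Function.forall_update_iff s fun j t => S j ∈ t]
    simp only [Set.mem_univ, true_and]
    exact and_comm
  have hrest : ∀ j ∈ Finset.univ.erase i, μ (Function.update s i Set.univ j) = μ (s j) :=
    fun j hj => by rw [Function.update_of_ne (Finset.ne_of_mem_erase hj)]
  rw [Measure.map_apply (by fun_prop) (.univ_pi hs), hpre, Measure.prod_prod, Measure.pi_pi,
    ← Finset.mul_prod_erase _ _ (Finset.mem_univ i),
    ← Finset.mul_prod_erase _ _ (Finset.mem_univ i), Finset.prod_congr rfl hrest,
    Function.update_self, measure_univ, one_mul, mul_comm]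

theorem integral_integral_eq_integral_eval_of_forall_update [DecidableEq ι]
    [IsProbabilityMeasure μ] {Φ : (ι → Z) → Z → ℝ} (i : ι)
    (hΦ : ∀ S z, Φ (Function.update S i z) = Φ S)
    (hint : Integrable (fun S => Φ S (S i)) (Measure.pi fun _ => μ)) :
    ∫ S, ∫ z, Φ S z ∂μ ∂Measure.pi (fun _ => μ) = ∫ S, Φ S (S i) ∂Measure.pi (fun _ => μ) := by
  have hmp := measurePreserving_update_prod (μ := μ) i
  have hcomp : (fun S => Φ S (S i)) ∘ (fun p : (ι → Z) × Z => Function.update p.1 i p.2)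
      = Function.uncurry Φ := by
    funext ⟨S, z⟩
    simp [hΦ]
  have hjoint : Integrable (Function.uncurry Φ) ((Measure.pi fun _ => μ).prod μ) :=
    hcomp ▸ hmp.integrable_comp_of_integrable hint
  calc ∫ S, ∫ z, Φ S z ∂μ ∂Measure.pi (fun _ => μ)
      = ∫ p, Function.uncurry Φ p ∂(Measure.pi fun _ => μ).prod μ := (integral_prod _ hjoint).symm
    _ = ∫ S, Φ S (S i) ∂Measure.pi (fun _ => μ) := by
      have h := integral_map hmp.measurable.aemeasurable (hmp.map_eq ▸ hint.aestronglyMeasurable)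
      rw [hmp.map_eq] at h
      rw [h, ← hcomp]
      rfl

end IIDSample

section SymmetricAlgorithm

variable {ι Z H : Type*} (V : H → Z → ℝ) {A : (ι → Z) → H}

theorem loss_comp_swap_eval_eq_of_perm_invariant [DecidableEq ι]
    (hA : ∀ S (σ : Equiv.Perm ι), A (S ∘ σ) = A S) (i j : ι) (S : ι → Z) :
    V (A (S ∘ Equiv.swap i j)) ((S ∘ Equiv.swap i j) i) = V (A S) (S j) := by
  rw [hA, Function.comp_apply, Equiv.swap_apply_left]

variable [Fintype ι] [MeasurableSpace Z] {μ : Measure Z}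

theorem integral_loss_eval_eq_of_perm_invariant [SigmaFinite μ]
    (hA : ∀ S (σ : Equiv.Perm ι), A (S ∘ σ) = A S) (i j : ι) :
    ∫ S, V (A S) (S j) ∂Measure.pi (fun _ => μ) = ∫ S, V (A S) (S i) ∂Measure.pi (fun _ => μ) := by
  classical
  simp_rw [← loss_comp_swap_eval_eq_of_perm_invariant V hA i j]
  exact integral_comp_perm (Equiv.swap i j) fun S => V (A S) (S i)

theorem integrable_loss_eval_of_perm_invariant [SigmaFinite μ]
    (hA : ∀ S (σ : Equiv.Perm ι), A (S ∘ σ) = A S) {i : ι}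
    (hint : Integrable (fun S => V (A S) (S i)) (Measure.pi fun _ => μ)) (j : ι) :
    Integrable (fun S => V (A S) (S j)) (Measure.pi fun _ => μ) := by
  classical
  simp_rw [← loss_comp_swap_eval_eq_of_perm_invariant V hA i j]
  exact (integrable_comp_perm_iff (Equiv.swap i j)).mpr hint

theorem integral_loss_eval_le_integral_of_isERM [IsProbabilityMeasure μ]
    (hERM : ∀ S f, ∑ j, V (A S) (S j) ≤ ∑ j, V f (S j))
    (hA : ∀ S (σ : Equiv.Perm ι), A (S ∘ σ) = A S) (i : ι)
    (hint : Integrable (fun S => V (A S) (S i)) (Measure.pi fun _ => μ))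
    (f : H) (hf : Integrable (V f) μ) :
    ∫ S, V (A S) (S i) ∂Measure.pi (fun _ => μ) ≤ ∫ z, V f z ∂μ := by
  have hintA := integrable_loss_eval_of_perm_invariant V hA hint
  have hintf : ∀ j, Integrable (fun S => V f (S j)) (Measure.pi fun _ => μ) :=
    fun j => integrable_comp_eval (μ := fun _ : ι => μ) hf
  have hsum : ∑ j : ι, ∫ S, V (A S) (S j) ∂Measure.pi (fun _ => μ)
      ≤ ∑ j : ι, ∫ S, V f (S j) ∂Measure.pi (fun _ => μ) := by
    rw [← integral_finsetSum _ fun j _ => hintA j, ← integral_finsetSum _ fun j _ => hintf j]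
    exact integral_mono (integrable_finsetSum _ fun j _ => hintA j)
      (integrable_finsetSum _ fun j _ => hintf j) fun S => hERM S f
  simp_rw [integral_loss_eval_eq_of_perm_invariant V hA i,
    integral_comp_eval (μ := fun _ : ι => μ) hf.aestronglyMeasurable, Finset.sum_const] at hsum
  exact le_of_nsmul_le_nsmul_right (Finset.card_ne_zero_of_mem (Finset.mem_univ i)) hsum

end SymmetricAlgorithm

theorem excess_risk_le_cvloo_stability_general {Z H : Type*} [MeasurableSpace Z] [Nonempty H]
    (μ : Measure Z) [IsProbabilityMeasure μ]
    (n : ℕ) (i : Fin n)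
    (V : H → Z → ℝ)
    (erm : (Fin n → Z) → H)
    (ermLoo : Fin n → (Fin n → Z) → H)
    -- `erm S` is an empirical risk minimizer on `S`
    (hERM : ∀ (S : Fin n → Z) (f : H), ∑ j, V (erm S) (S j) ≤ ∑ j, V f (S j))
    -- `erm` is a symmetric algorithm
    (hERMsym : ∀ (S : Fin n → Z) (σ : Equiv.Perm (Fin n)), erm (S ∘ σ) = erm S)
    -- `ermLoo i S` does not depend on the removed point `z_i`
    (hLooIndep : ∀ S S' : Fin n → Z, (∀ j, j ≠ i → S j = S' j) → ermLoo i S = ermLoo i S')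
    (hInt2 : Integrable (fun S : Fin n → Z => V (ermLoo i S) (S i))
      (Measure.pi fun _ : Fin n => μ))
    (hInt3 : Integrable (fun S : Fin n → Z => V (erm S) (S i))
      (Measure.pi fun _ : Fin n => μ))
    (hIntV : ∀ f : H, Integrable (V f) μ) :
    (∫ S, ∫ z, V (ermLoo i S) z ∂μ ∂(Measure.pi fun _ : Fin n => μ))
        - ⨅ f : H, ∫ z, V f z ∂μ
      ≤ ∫ S, (V (ermLoo i S) (S i) - V (erm S) (S i))
          ∂(Measure.pi fun _ : Fin n => μ) := by
  have hLoo : ∫ S, ∫ z, V (ermLoo i S) z ∂μ ∂(Measure.pi fun _ : Fin n => μ)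
      = ∫ S, V (ermLoo i S) (S i) ∂(Measure.pi fun _ : Fin n => μ) :=
    integral_integral_eq_integral_eval_of_forall_update i
      (fun S z => by rw [hLooIndep _ S fun j hj => Function.update_of_ne hj z S]) hInt2
  have hErm : ∫ S, V (erm S) (S i) ∂(Measure.pi fun _ : Fin n => μ) ≤ ⨅ f : H, ∫ z, V f z ∂μ :=
    le_ciInf fun f => integral_loss_eval_le_integral_of_isERM V hERM hERMsym i hInt3 f (hIntV f)
  rw [integral_sub hInt2 hInt3, hLoo]
  linarith

/-- Excess risk & CV_loo stability: the expected excess risk of the leave-one-out ERM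
solution is bounded by the expected CV_loo stability:
`E_S[I[f_{S_i}]] - inf_{f∈H} I[f] ≤ E_S[V(f_{S_i}, z_i) - V(f_S, z_i)]`. -/
theorem excess_risk_le_cvloo_stability {Z H : Type*} [MeasurableSpace Z] [Nonempty H]
    (μ : Measure Z) [IsProbabilityMeasure μ]
    (n : ℕ) (hn : 0 < n) (i : Fin n)
    (V : H → Z → ℝ) (hVnn : ∀ f z, 0 ≤ V f z)
    (erm : (Fin n → Z) → H)
    (ermLoo : Fin n → (Fin n → Z) → H)
    -- `erm S` is an empirical risk minimizer on `S`
    (hERM : ∀ (S : Fin n → Z) (f : H), ∑ j, V (erm S) (S j) ≤ ∑ j, V f (S j))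
    -- `erm` is a symmetric algorithm
    (hERMsym : ∀ (S : Fin n → Z) (σ : Equiv.Perm (Fin n)), erm (S ∘ σ) = erm S)
    -- `ermLoo i S` is an empirical risk minimizer on the leave-one-out dataset `S_i`
    (hLooERM : ∀ (S : Fin n → Z) (f : H),
      ∑ j ∈ Finset.univ.erase i, V (ermLoo i S) (S j)
        ≤ ∑ j ∈ Finset.univ.erase i, V f (S j))
    -- `ermLoo i S` does not depend on the removed point `z_i`
    (hLooIndep : ∀ S S' : Fin n → Z, (∀ j, j ≠ i → S j = S' j) → ermLoo i S = ermLoo i S')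
    (hInt1 : Integrable (fun S : Fin n → Z => ∫ z, V (ermLoo i S) z ∂μ)
      (Measure.pi fun _ : Fin n => μ))
    (hInt2 : Integrable (fun S : Fin n → Z => V (ermLoo i S) (S i))
      (Measure.pi fun _ : Fin n => μ))
    (hInt3 : Integrable (fun S : Fin n → Z => V (erm S) (S i))
      (Measure.pi fun _ : Fin n => μ))
    (hIntV : ∀ f : H, Integrable (V f) μ) :
    (∫ S, ∫ z, V (ermLoo i S) z ∂μ ∂(Measure.pi fun _ : Fin n => μ))
        - ⨅ f : H, ∫ z, V f z ∂μ
      ≤ ∫ S, (V (ermLoo i S) (S i) - V (erm S) (S i))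
          ∂(Measure.pi fun _ : Fin n => μ) :=
  excess_risk_le_cvloo_stability_general μ n i V erm ermLoo hERM hERMsym hLooIndep hInt2 hInt3 hIntV
end

section
/- Let K ∈ ℝ^{n×n} be symmetric positive definite (hence invertible), b the i-th standard basis vector, a = −Kb, K* = K + a bᵀ. Then with k = K^{-1}a = −b and h = bᵀK^{-1}: (i) 1 + bᵀK^{-1}a = 0; (ii) the Moore–Penrose pseudoinverse of K* is K*^† = K^{-1} − K^{-1} h^† h, where h^† = hᵀ/‖h‖²; (iii) K*^† K* = I − k k^† = I − b bᵀ. -/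
open Matrix

/-- `B` satisfies the four Moore–Penrose conditions for `A`. -/
def IsMoorePenrose {d n : ℕ} (A : Matrix (Fin d) (Fin n) ℝ)
    (B : Matrix (Fin n) (Fin d) ℝ) : Prop :=
  A * B * A = A ∧ B * A * B = B ∧ (A * B)ᵀ = A * B ∧ (B * A)ᵀ = B * A

/-!
Since `a = -Kb` and `bᵀb = 1`, the update factors as `K* = K Q_b`, where `Q_v = I - vvᵀ/(vᵀv)`
is the orthogonal projector onto `v^⊥`; likewise the proposed inverse is `P = K⁻¹ Q_h`.
Because `hᵀK = bᵀ` and `bᵀK⁻¹ = hᵀ`, the rank-one corrections are annihilated by the outer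
projectors: `Q_h K Q_b = K Q_b` and `Q_b K⁻¹ Q_h = K⁻¹ Q_h`. Hence `P K* = Q_b` and
`K* P = Q_h`, two symmetric idempotents, and the Moore–Penrose conditions follow at once.
-/

theorem IsMoorePenrose.of_mul_eq {d n : ℕ} {A : Matrix (Fin d) (Fin n) ℝ}
    {B : Matrix (Fin n) (Fin d) ℝ} {P : Matrix (Fin d) (Fin d) ℝ} {Q : Matrix (Fin n) (Fin n) ℝ}
    (hAB : A * B = P) (hBA : B * A = Q) (hP : Pᵀ = P) (hQ : Qᵀ = Q)
    (hAQ : A * Q = A) (hBP : B * P = B) : IsMoorePenrose A B :=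
  ⟨by rw [Matrix.mul_assoc, hBA, hAQ], by rw [Matrix.mul_assoc, hAB, hBP],
    by rw [hAB, hP], by rw [hBA, hQ]⟩

namespace Matrix

variable {𝕜 n : Type*} [Field 𝕜] [Fintype n] [DecidableEq n]

def projOrthCompl (v : n → 𝕜) : Matrix n n 𝕜 :=
  1 - (v ⬝ᵥ v)⁻¹ • vecMulVec v v

theorem transpose_projOrthCompl (v : n → 𝕜) : (projOrthCompl v)ᵀ = projOrthCompl v := by
  simp [projOrthCompl]

theorem projOrthCompl_of_dotProduct_self_eq_one {v : n → 𝕜} (hv : v ⬝ᵥ v = 1) :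
    projOrthCompl v = 1 - vecMulVec v v := by
  rw [projOrthCompl, hv, inv_one, one_smul]

theorem mul_projOrthCompl (M : Matrix n n 𝕜) (v : n → 𝕜) :
    M * projOrthCompl v = M - M * vecMulVec ((v ⬝ᵥ v)⁻¹ • v) v := by
  rw [projOrthCompl, Matrix.mul_sub, Matrix.mul_one, smul_vecMulVec, Matrix.mul_smul]

theorem vecMulVec_mul_projOrthCompl {v : n → 𝕜} (hv : v ⬝ᵥ v ≠ 0) (x : n → 𝕜) :
    vecMulVec x v * projOrthCompl v = 0 := by
  rw [projOrthCompl, Matrix.mul_sub, Matrix.mul_one, Matrix.mul_smul, vecMulVec_mul_vecMulVec,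
    vecMulVec_smul, smul_smul, inv_mul_cancel₀ hv, one_smul, sub_self]

theorem projOrthCompl_mul_self {v : n → 𝕜} (hv : v ⬝ᵥ v ≠ 0) :
    projOrthCompl v * projOrthCompl v = projOrthCompl v := by
  nth_rewrite 1 [projOrthCompl]
  rw [Matrix.sub_mul, Matrix.one_mul, Matrix.smul_mul, vecMulVec_mul_projOrthCompl hv,
    smul_zero, sub_zero]

theorem projOrthCompl_mul_mul_projOrthCompl {v w : n → 𝕜} (M : Matrix n n 𝕜)
    (hw : w ⬝ᵥ w ≠ 0) (hvw : v ᵥ* M = w) :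
    projOrthCompl v * M * projOrthCompl w = M * projOrthCompl w := by
  rw [projOrthCompl, Matrix.sub_mul, Matrix.one_mul, Matrix.smul_mul, vecMulVec_mul, hvw,
    Matrix.sub_mul, Matrix.smul_mul, vecMulVec_mul_projOrthCompl hw, smul_zero, sub_zero]

theorem add_vecMulVec_neg_mulVec {u : n → 𝕜} (hu : u ⬝ᵥ u = 1) (K : Matrix n n 𝕜) :
    K + vecMulVec (-(K *ᵥ u)) u = K * projOrthCompl u := by
  rw [projOrthCompl_of_dotProduct_self_eq_one hu, Matrix.mul_sub, Matrix.mul_one,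
    mul_vecMulVec, neg_vecMulVec, sub_eq_add_neg]

variable {K : Matrix n n 𝕜}

theorem inv_mul_projOrthCompl_mul_mul_projOrthCompl (hK : IsUnit K.det) {u : n → 𝕜}
    (hu : u ⬝ᵥ u ≠ 0) :
    K⁻¹ * projOrthCompl (u ᵥ* K⁻¹) * (K * projOrthCompl u) = projOrthCompl u := by
  have hvK : (u ᵥ* K⁻¹) ᵥ* K = u := by rw [vecMul_vecMul, nonsing_inv_mul K hK, vecMul_one]
  rw [Matrix.mul_assoc, ← Matrix.mul_assoc _ K,
    projOrthCompl_mul_mul_projOrthCompl K hu hvK, ← Matrix.mul_assoc, nonsing_inv_mul K hK,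
    Matrix.one_mul]

theorem mul_projOrthCompl_mul_inv_mul_projOrthCompl (hK : IsUnit K.det) {u : n → 𝕜}
    (hv : (u ᵥ* K⁻¹) ⬝ᵥ (u ᵥ* K⁻¹) ≠ 0) :
    K * projOrthCompl u * (K⁻¹ * projOrthCompl (u ᵥ* K⁻¹)) = projOrthCompl (u ᵥ* K⁻¹) := by
  rw [Matrix.mul_assoc, ← Matrix.mul_assoc _ K⁻¹,
    projOrthCompl_mul_mul_projOrthCompl K⁻¹ hv rfl, ← Matrix.mul_assoc, mul_nonsing_inv K hK,
    Matrix.one_mul]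

end Matrix

theorem isMoorePenrose_mul_projOrthCompl {n : ℕ} {K : Matrix (Fin n) (Fin n) ℝ}
    (hK : IsUnit K.det) {u : Fin n → ℝ} (hu : u ≠ 0) :
    IsMoorePenrose (K * projOrthCompl u) (K⁻¹ * projOrthCompl (u ᵥ* K⁻¹)) := by
  have hv : u ᵥ* K⁻¹ ≠ 0 := fun h0 => hu <| by
    rw [← vecMul_one u, ← nonsing_inv_mul K hK, ← vecMul_vecMul, h0, zero_vecMul]
  have hu' := dotProduct_self_eq_zero.not.mpr hu
  have hv' := dotProduct_self_eq_zero.not.mpr hv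
  refine .of_mul_eq (mul_projOrthCompl_mul_inv_mul_projOrthCompl hK hv')
    (inv_mul_projOrthCompl_mul_mul_projOrthCompl hK hu') (transpose_projOrthCompl _)
    (transpose_projOrthCompl _) ?_ ?_
  · rw [Matrix.mul_assoc, projOrthCompl_mul_self hu']
  · rw [Matrix.mul_assoc, projOrthCompl_mul_self hv']

/-- Meyer's rank-one pseudoinverse update for `K* = K + a bᵀ` with `K` symmetric positive
definite, `b = e_i`, `a = −Kb`: with `k = K⁻¹a = −b` and `h = bᵀK⁻¹`,
(i) `1 + bᵀK⁻¹a = 0`; (ii) `K*^† = K⁻¹ − K⁻¹h^†h` where `h^† = hᵀ/‖h‖²`;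
(iii) `K*^† K* = I − kk^† = I − bbᵀ`. -/
theorem meyer_rank_one_update {n : ℕ} (K : Matrix (Fin n) (Fin n) ℝ)
    (hK : K.PosDef) (i : Fin n) :
    let b : Fin n → ℝ := Pi.single i 1
    let a : Fin n → ℝ := -(K.mulVec b)
    let Kstar : Matrix (Fin n) (Fin n) ℝ := K + Matrix.vecMulVec a b
    let h : Fin n → ℝ := Matrix.vecMul b K⁻¹
    let hdag : Fin n → ℝ := (∑ j, h j ^ 2)⁻¹ • h
    let P : Matrix (Fin n) (Fin n) ℝ := K⁻¹ - K⁻¹ * Matrix.vecMulVec hdag h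
    (1 + dotProduct b (K⁻¹.mulVec a) = 0) ∧
    (K⁻¹.mulVec a = -b) ∧
    IsMoorePenrose Kstar P ∧
    P * Kstar = 1 - Matrix.vecMulVec b b := by
  intro b a Kstar h hdag P
  have hKdet : IsUnit K.det := isUnit_iff_ne_zero.mpr hK.det_pos.ne'
  have hbb : b ⬝ᵥ b = 1 := by simp [b]
  have hb : b ≠ 0 := fun h0 => by simp [h0] at hbb
  have hKa : K⁻¹ *ᵥ a = -b := by
    rw [mulVec_neg, mulVec_mulVec, nonsing_inv_mul K hKdet, one_mulVec]
  have hKstar : Kstar = K * projOrthCompl b := add_vecMulVec_neg_mulVec hbb K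
  have hP : P = K⁻¹ * projOrthCompl h := by
    simp only [P, hdag, mul_projOrthCompl, dotProduct, sq]
  refine ⟨by rw [hKa, dotProduct_neg, hbb, add_neg_cancel], hKa, ?_, ?_⟩
  · rw [hKstar, hP]
    exact isMoorePenrose_mul_projOrthCompl hKdet hb
  · rw [hKstar, hP, inv_mul_projOrthCompl_mul_mul_projOrthCompl hKdet (hbb ▸ one_ne_zero),
      projOrthCompl_of_dotProduct_self_eq_one hbb]
end

section
/- Let K ∈ ℝ^{n×n} be symmetric positive definite, b the i-th standard basis vector, and K_{S_i} the matrix K with i-th row and column zeroed. Then K^{-1} − (K_{S_i})^† = ((K^{-1})_{ii})^{-1} hᵀh, where h = bᵀK^{-1} is the i-th row of K^{-1}. In particular ‖K^{-1} − (K_{S_i})^†‖_op = ‖h‖²/(K^{-1})_{ii}. -/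
/-!
Put `J = K⁻¹`, `α = Jᵢᵢ > 0` and `E = eᵢeᵢᵀ`, so that the zeroed matrix is the compression
`A = (1 - E) K (1 - E)`. Since `E J E = α E`, the rank-one downdate `Q = J - α⁻¹ J E J` satisfies
`E Q = Q E = 0`; then `K Q` and `Q K` differ from `1` only by terms annihilated by `1 - E`, so
`A Q = Q A = 1 - E` is an orthogonal projection. Hence `Q` satisfies the Moore–Penrose conditions,
which determine the pseudoinverse uniquely, and `P = Q`. By symmetry of `J`, `J E J = hᵀh`, a
rank-one matrix whose operator norm is `‖h‖²`.
-/

open Matrix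

/-- Operator norm of a matrix with respect to Euclidean norms. -/
noncomputable def opNorm {m n : ℕ} (A : Matrix (Fin m) (Fin n) ℝ) : ℝ :=
  ‖LinearMap.toContinuousLinearMap (Matrix.toEuclideanLin A)‖

namespace IsMoorePenrose

variable {d n : ℕ} {A : Matrix (Fin d) (Fin n) ℝ} {P Q : Matrix (Fin n) (Fin d) ℝ}

theorem self_mul_eq (hP : IsMoorePenrose A P) (hQ : IsMoorePenrose A Q) : A * P = A * Q :=
  calc A * P = (A * Q * A * P)ᵀ := by rw [hQ.1, hP.2.2.1]
    _ = A * P * (A * Q) := by rw [Matrix.mul_assoc, transpose_mul, hP.2.2.1, hQ.2.2.1]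
    _ = A * Q := by rw [← Matrix.mul_assoc, hP.1]

theorem mul_self_eq (hP : IsMoorePenrose A P) (hQ : IsMoorePenrose A Q) : P * A = Q * A :=
  calc P * A = (P * A * (Q * A))ᵀ := by
        rw [show P * A * (Q * A) = P * (A * Q * A) by simp only [Matrix.mul_assoc], hQ.1,
          hP.2.2.2]
    _ = Q * A * (P * A) := by rw [transpose_mul, hP.2.2.2, hQ.2.2.2]
    _ = Q * A := by rw [Matrix.mul_assoc, ← Matrix.mul_assoc A, hP.1]

theorem unique (hP : IsMoorePenrose A P) (hQ : IsMoorePenrose A Q) : P = Q :=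
  calc P = P * A * P := hP.2.1.symm
    _ = Q * A * Q := by
        rw [Matrix.mul_assoc, hP.self_mul_eq hQ, ← Matrix.mul_assoc, hP.mul_self_eq hQ]
    _ = Q := hQ.2.1

theorem of_mul_eq_s13 {R : Matrix (Fin d) (Fin d) ℝ} {S : Matrix (Fin n) (Fin n) ℝ}
    (hAQ : A * Q = R) (hQA : Q * A = S) (hR : Rᵀ = R) (hS : Sᵀ = S)
    (hRA : R * A = A) (hSQ : S * Q = Q) : IsMoorePenrose A Q :=
  ⟨by rw [hAQ, hRA], by rw [hQA, hSQ], by rw [hAQ, hR], by rw [hQA, hS]⟩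

end IsMoorePenrose

theorem isMoorePenrose_one_sub_mul_mul_one_sub {n : ℕ} {K J E : Matrix (Fin n) (Fin n) ℝ}
    {α : ℝ} (hKJ : K * J = 1) (hJK : J * K = 1) (hE : E * E = E) (hEt : Eᵀ = E)
    (hEJE : E * J * E = α • E) (hα : α ≠ 0) :
    IsMoorePenrose ((1 - E) * K * (1 - E)) (J - α⁻¹ • (J * E * J)) := by
  set Q := J - α⁻¹ • (J * E * J)
  have hEQ : E * Q = 0 := by
    rw [mul_sub, Matrix.mul_smul, ← Matrix.mul_assoc, ← Matrix.mul_assoc, hEJE, smul_mul,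
      smul_smul, inv_mul_cancel₀ hα, one_smul, sub_self]
  have hQE : Q * E = 0 := by
    rw [sub_mul, Matrix.smul_mul, Matrix.mul_assoc, Matrix.mul_assoc, ← Matrix.mul_assoc E,
      hEJE, Matrix.mul_smul, smul_smul, inv_mul_cancel₀ hα, one_smul, sub_self]
  have hKQ : K * Q = 1 - α⁻¹ • (E * J) := by
    rw [mul_sub, hKJ, Matrix.mul_smul, ← Matrix.mul_assoc, ← Matrix.mul_assoc, hKJ,
      Matrix.one_mul]
  have hQK : Q * K = 1 - α⁻¹ • (J * E) := by
    rw [sub_mul, hJK, Matrix.smul_mul, Matrix.mul_assoc, hJK, Matrix.mul_one]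
  have hEc : (1 - E) * E = 0 := by rw [sub_mul, Matrix.one_mul, hE, sub_self]
  have hcE : E * (1 - E) = 0 := by rw [mul_sub, Matrix.mul_one, hE, sub_self]
  have hcQ : (1 - E) * Q = Q := by rw [sub_mul, Matrix.one_mul, hEQ, sub_zero]
  have hQc : Q * (1 - E) = Q := by rw [mul_sub, Matrix.mul_one, hQE, sub_zero]
  refine IsMoorePenrose.of_mul_eq_s13 (R := 1 - E) (S := 1 - E) ?_ ?_ ?_ ?_ ?_ hcQ
  · calc (1 - E) * K * (1 - E) * Q = (1 - E) * (K * Q) := by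
          rw [Matrix.mul_assoc, Matrix.mul_assoc, hcQ]
      _ = 1 - E := by
          rw [hKQ, mul_sub, Matrix.mul_one, Matrix.mul_smul, ← Matrix.mul_assoc, hEc,
            Matrix.zero_mul, smul_zero, sub_zero]
  · calc Q * ((1 - E) * K * (1 - E)) = Q * K * (1 - E) := by
          rw [← Matrix.mul_assoc, ← Matrix.mul_assoc, hQc]
      _ = 1 - E := by
          rw [hQK, sub_mul, Matrix.one_mul, Matrix.smul_mul, Matrix.mul_assoc, hcE,
            Matrix.mul_zero, smul_zero, sub_zero]
  · rw [transpose_sub, transpose_one, hEt]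
  · rw [transpose_sub, transpose_one, hEt]
  · rw [← Matrix.mul_assoc, ← Matrix.mul_assoc, sub_mul 1 E, hcE, Matrix.one_mul, sub_zero]

theorem Matrix.one_sub_single_mul_mul_one_sub_single {ι R : Type*} [Fintype ι] [DecidableEq ι]
    [Ring R] (K : Matrix ι ι R) (i : ι) :
    (1 - single i i 1) * K * (1 - single i i 1) =
      of fun j k => if j = i ∨ k = i then 0 else K j k := by
  ext j k
  by_cases hj : j = i <;> by_cases hk : k = i <;> simp [sub_mul, mul_sub, hj, hk, Ne.symm]

theorem Matrix.IsSymm.mul_single_mul {ι R : Type*} [Fintype ι] [DecidableEq ι] [CommSemiring R]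
    {J : Matrix ι ι R} (hJ : J.IsSymm) (i : ι) :
    J * single i i 1 * J = vecMulVec (Pi.single i 1 ᵥ* J) (Pi.single i 1 ᵥ* J) := by
  rw [single_eq_single_vecMulVec_single, mul_vecMulVec, vecMulVec_mul, ← vecMul_transpose,
    hJ.eq]

theorem opNorm_vecMulVec {m n : ℕ} (u : Fin m → ℝ) (v : Fin n → ℝ) :
    opNorm (vecMulVec u v) = ‖WithLp.toLp 2 u‖ * ‖WithLp.toLp 2 v‖ := by
  set r := InnerProductSpace.rankOne ℝ (WithLp.toLp 2 u) (WithLp.toLp 2 v)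
  have hr : toEuclideanLin.symm (r : _ →ₗ[ℝ] _) = vecMulVec u v := by
    simpa using InnerProductSpace.symm_toEuclideanLin_rankOne (WithLp.toLp 2 u) (WithLp.toLp 2 v)
  have hcont : LinearMap.toContinuousLinearMap (r : _ →ₗ[ℝ] _) = r := by ext; simp
  rw [opNorm, ← hr, LinearEquiv.apply_symm_apply, hcont, InnerProductSpace.norm_rankOne]

/-- For `K` symmetric positive definite and `K_{S_i}` the matrix `K` with `i`-th row and
column zeroed: `K⁻¹ − (K_{S_i})^† = ((K⁻¹)_{ii})⁻¹ hᵀh` where `h = bᵀK⁻¹` is the `i`-th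
row of `K⁻¹`; in particular `‖K⁻¹ − (K_{S_i})^†‖_op = ‖h‖²/(K⁻¹)_{ii}`. -/
theorem pinv_loo_difference {n : ℕ} (K : Matrix (Fin n) (Fin n) ℝ)
    (hK : K.PosDef) (i : Fin n) (P : Matrix (Fin n) (Fin n) ℝ)
    (hP : IsMoorePenrose
      (Matrix.of fun j k => if j = i ∨ k = i then (0 : ℝ) else K j k) P) :
    let h : Fin n → ℝ := Matrix.vecMul (Pi.single i 1) K⁻¹
    K⁻¹ - P = (K⁻¹ i i)⁻¹ • Matrix.vecMulVec h h ∧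
    opNorm (K⁻¹ - P) = (∑ j, h j ^ 2) / K⁻¹ i i := by
  intro h
  have hJ : K⁻¹.PosDef := hK.inv
  have hJsymm : K⁻¹.IsSymm := by
    simpa [IsSymm, conjTranspose_eq_transpose_of_trivial] using hJ.isHermitian.eq
  have hii : 0 < K⁻¹ i i := hJ.diag_pos
  have hdet : IsUnit K.det := hK.det_pos.ne'.isUnit
  have hQ := isMoorePenrose_one_sub_mul_mul_one_sub (mul_nonsing_inv K hdet)
    (nonsing_inv_mul K hdet) (by simp) (transpose_single i i 1) (by simp [smul_single]) hii.ne'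
  rw [one_sub_single_mul_mul_one_sub_single, hJsymm.mul_single_mul] at hQ
  have hdiff : K⁻¹ - P = (K⁻¹ i i)⁻¹ • vecMulVec h h := by
    rw [hP.unique hQ, sub_sub_cancel]
  refine ⟨hdiff, ?_⟩
  rw [hdiff, ← smul_vecMulVec, opNorm_vecMulVec, WithLp.toLp_smul, norm_smul,
    Real.norm_of_nonneg (inv_nonneg.2 hii.le), mul_assoc, ← sq, EuclideanSpace.real_norm_sq_eq,
    div_eq_inv_mul]
end

section
/- Let K ∈ ℝ^{n×n} be symmetric positive definite, y ∈ ℝ^n, i ∈ {1,...,n}, and define coefficient vectors c_S = K^{-1}y and c_{S_i} = (K_{S_i})^† y_i where y_i is y with i-th entry zeroed and K_{S_i} is K with row/column i zeroed. Then the RKHS norm of the difference of the corresponding minimum-norm interpolants satisfies ‖f_S^† − f_{S_i}^†‖_H = ‖K^{1/2}(c_S − c_{S_i})‖ ≤ ‖K^{1/2}‖_op · ‖K^{-1}‖_op · cond(K) · ‖y‖. -/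
open Matrix

/-- Euclidean norm of a vector. -/
noncomputable def enorm {n : ℕ} (v : Fin n → ℝ) : ℝ :=
  Real.sqrt (∑ i, v i ^ 2)

/-- Square root of a positive semidefinite matrix, as `Matrix.PosSemidef.sqrt` was defined in
the older Mathlib (removed since). -/
noncomputable def Matrix.PosSemidef.sqrt {n : ℕ} {A : Matrix (Fin n) (Fin n) ℝ}
    (hA : A.PosSemidef) : Matrix (Fin n) (Fin n) ℝ :=
  (hA.1.eigenvectorUnitary : Matrix (Fin n) (Fin n) ℝ) *
    diagonal ((↑) ∘ (√·) ∘ hA.1.eigenvalues) *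
    (star (hA.1.eigenvectorUnitary : Matrix (Fin n) (Fin n) ℝ))

/-!
Write `e = eᵢ`, `u = K⁻¹e` (the `i`-th column of `K⁻¹`) and `κ = (K⁻¹)ᵢᵢ = e ⬝ u > 0`. Zeroing
row and column `i` of `K` is the compression `E K E` by the projection `E = 1 - e eᵀ`, and the
rank-one downdate `Q = K⁻¹ - κ⁻¹ u uᵀ` satisfies `Q e = 0` and `K Q = 1 - κ⁻¹ e uᵀ`, hence
`(E K E) Q = E`; so `Q` is the Moore–Penrose inverse of `K_{S_i}`. Since `Q` kills the `i`-th
coordinate, `c_S - c_{S_i} = K⁻¹y - Qy = κ⁻¹ (u ⬝ y) u`. Finally `‖u‖ ≤ ‖K⁻¹‖` and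
`κ⁻¹ ≤ Kᵢᵢ ≤ ‖K‖`, the first inequality being Cauchy–Schwarz for the form of `K` applied to
`e` and `u`, for which `eᵀK u = 1`.
-/

section EuclideanNorm

variable {m n : ℕ}

lemma enorm_eq_norm_toLp (v : Fin n → ℝ) : _root_.enorm v = ‖WithLp.toLp 2 v‖ := by
  simp [_root_.enorm, EuclideanSpace.norm_eq, sq_abs]

lemma enorm_nonneg (v : Fin n → ℝ) : 0 ≤ _root_.enorm v := Real.sqrt_nonneg _

lemma opNorm_nonneg (A : Matrix (Fin m) (Fin n) ℝ) : 0 ≤ opNorm A := norm_nonneg _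

lemma enorm_smul_eq_abs_mul (c : ℝ) (v : Fin n → ℝ) :
    _root_.enorm (c • v) = |c| * _root_.enorm v := by
  rw [enorm_eq_norm_toLp, enorm_eq_norm_toLp, WithLp.toLp_smul, norm_smul, Real.norm_eq_abs]

lemma enorm_single_one (i : Fin n) : _root_.enorm (Pi.single i 1 : Fin n → ℝ) = 1 := by
  rw [enorm_eq_norm_toLp, PiLp.toLp_single, PiLp.norm_single, norm_one]

lemma abs_apply_le_enorm (v : Fin n → ℝ) (i : Fin n) : |v i| ≤ _root_.enorm v := by
  simpa [enorm_eq_norm_toLp] using PiLp.norm_apply_le (WithLp.toLp 2 v) i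

lemma abs_dotProduct_le_enorm_mul_enorm (v w : Fin n → ℝ) :
    |v ⬝ᵥ w| ≤ _root_.enorm v * _root_.enorm w := by
  simpa [enorm_eq_norm_toLp, EuclideanSpace.inner_toLp_toLp, dotProduct_comm] using
    abs_real_inner_le_norm (WithLp.toLp 2 v) (WithLp.toLp 2 w)

lemma enorm_mulVec_le (A : Matrix (Fin m) (Fin n) ℝ) (v : Fin n → ℝ) :
    _root_.enorm (A *ᵥ v) ≤ opNorm A * _root_.enorm v := by
  simpa [enorm_eq_norm_toLp, opNorm] using
    (LinearMap.toContinuousLinearMap (toEuclideanLin A)).le_opNorm (WithLp.toLp 2 v)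

lemma abs_apply_le_opNorm (A : Matrix (Fin m) (Fin n) ℝ) (i : Fin m) (j : Fin n) :
    |A i j| ≤ opNorm A :=
  calc |A i j| = |(A *ᵥ Pi.single j 1) i| := by rw [mulVec_single_one, col_apply]
    _ ≤ _root_.enorm (A *ᵥ Pi.single j 1) := abs_apply_le_enorm _ _
    _ ≤ opNorm A := by simpa [enorm_single_one] using enorm_mulVec_le A (Pi.single j 1)

end EuclideanNorm

lemma Matrix.PosSemidef.sq_dotProduct_mulVec_le {ι : Type*} [Fintype ι] {M : Matrix ι ι ℝ}
    (hM : M.PosSemidef) (x y : ι → ℝ) :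
    (x ⬝ᵥ M *ᵥ y) ^ 2 ≤ (x ⬝ᵥ M *ᵥ x) * (y ⬝ᵥ M *ᵥ y) := by
  let _ := M.toSeminormedAddCommGroup hM
  let _ := M.toInnerProductSpace hM
  have h : (M *ᵥ y ⬝ᵥ star x) * (M *ᵥ y ⬝ᵥ star x) ≤ (M *ᵥ x ⬝ᵥ star x) * (M *ᵥ y ⬝ᵥ star y) :=
    real_inner_mul_inner_self_le x y
  simpa only [star_trivial, dotProduct_comm _ x, dotProduct_comm _ y, ← sq] using h

lemma Matrix.PosDef.inv_inv_apply_le_opNorm {n : ℕ} {K : Matrix (Fin n) (Fin n) ℝ}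
    (hK : K.PosDef) (i : Fin n) : (K⁻¹ i i)⁻¹ ≤ opNorm K := by
  have hKK : K * K⁻¹ = 1 := mul_nonsing_inv K ((isUnit_iff_isUnit_det K).mp hK.isUnit)
  have hCS := hK.posSemidef.sq_dotProduct_mulVec_le (Pi.single i 1) (K⁻¹ *ᵥ Pi.single i 1)
  rw [mulVec_mulVec, hKK, one_mulVec, single_one_dotProduct, single_one_dotProduct,
    dotProduct_single_one, Pi.single_eq_same, one_pow, mulVec_single_one, mulVec_single_one,
    col_apply, col_apply] at hCS
  calc (K⁻¹ i i)⁻¹ ≤ K i i := (inv_le_iff_one_le_mul₀ hK.inv.diag_pos).mpr hCS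
    _ ≤ |K i i| := le_abs_self _
    _ ≤ opNorm K := abs_apply_le_opNorm K i i

namespace IsMoorePenrose

variable {d m : ℕ} {A : Matrix (Fin d) (Fin m) ℝ} {B C : Matrix (Fin m) (Fin d) ℝ}

lemma self_mul_eq_self_mul (hB : IsMoorePenrose A B) (hC : IsMoorePenrose A C) : A * B = A * C :=
  calc A * B = (A * C * (A * B))ᵀ := by rw [← Matrix.mul_assoc, hC.1, hB.2.2.1]
    _ = A * B * (A * C) := by rw [transpose_mul, hB.2.2.1, hC.2.2.1]
    _ = A * C := by rw [← Matrix.mul_assoc, hB.1]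

lemma mul_self_eq_mul_self (hB : IsMoorePenrose A B) (hC : IsMoorePenrose A C) : B * A = C * A :=
  calc B * A = (B * A * (C * A))ᵀ := by rw [Matrix.mul_assoc, ← Matrix.mul_assoc A, hC.1, hB.2.2.2]
    _ = C * A * (B * A) := by rw [transpose_mul, hB.2.2.2, hC.2.2.2]
    _ = C * A := by rw [Matrix.mul_assoc, ← Matrix.mul_assoc A, hB.1]

lemma unique_s16 (hB : IsMoorePenrose A B) (hC : IsMoorePenrose A C) : B = C :=
  calc B = B * A * B := hB.2.1.symm
    _ = C * A * C := by
      rw [hB.mul_self_eq_mul_self hC, Matrix.mul_assoc, hB.self_mul_eq_self_mul hC,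
        ← Matrix.mul_assoc]
    _ = C := hC.2.1

end IsMoorePenrose

lemma isMoorePenrose_of_mul_eq {n : ℕ} {A Q E : Matrix (Fin n) (Fin n) ℝ} (hA : Aᵀ = A)
    (hQ : Qᵀ = Q) (hE : Eᵀ = E) (hAQ : A * Q = E) (hEA : E * A = A) (hEQ : E * Q = Q) :
    IsMoorePenrose A Q := by
  have hQA : Q * A = E := by rw [← hQ, ← hA, ← transpose_mul, hAQ, hE]
  exact ⟨by rw [hAQ, hEA], by rw [hQA, hEQ], by rw [hAQ, hE], by rw [hQA, hE]⟩

section InverseDowndate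

variable {ι 𝕜 : Type*} [Fintype ι] [DecidableEq ι] [Field 𝕜]

noncomputable def inverseDowndate (K : Matrix ι ι 𝕜) (e : ι → 𝕜) : Matrix ι ι 𝕜 :=
  K⁻¹ - (e ⬝ᵥ K⁻¹ *ᵥ e)⁻¹ • vecMulVec (K⁻¹ *ᵥ e) (K⁻¹ *ᵥ e)

variable {K : Matrix ι ι 𝕜} {e : ι → 𝕜}

lemma sub_inverseDowndate_mulVec (y : ι → 𝕜) :
    K⁻¹ *ᵥ y - inverseDowndate K e *ᵥ y
      = ((e ⬝ᵥ K⁻¹ *ᵥ e)⁻¹ * (K⁻¹ *ᵥ e ⬝ᵥ y)) • (K⁻¹ *ᵥ e) := by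
  rw [inverseDowndate, sub_mulVec, sub_sub_cancel, smul_mulVec, vecMulVec_mulVec,
    op_smul_eq_smul, smul_smul]

lemma inverseDowndate_mulVec_self (hκ : e ⬝ᵥ K⁻¹ *ᵥ e ≠ 0) : inverseDowndate K e *ᵥ e = 0 := by
  rw [← sub_eq_self, sub_inverseDowndate_mulVec, dotProduct_comm (K⁻¹ *ᵥ e), inv_mul_cancel₀ hκ,
    one_smul]

lemma transpose_inverseDowndate (hK : Kᵀ = K) : (inverseDowndate K e)ᵀ = inverseDowndate K e := by
  rw [inverseDowndate, transpose_sub, transpose_smul, transpose_vecMulVec, transpose_nonsing_inv,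
    hK]

lemma mul_inverseDowndate (hK : IsUnit K.det) :
    K * inverseDowndate K e = 1 - (e ⬝ᵥ K⁻¹ *ᵥ e)⁻¹ • vecMulVec e (K⁻¹ *ᵥ e) := by
  rw [inverseDowndate, Matrix.mul_sub, mul_nonsing_inv K hK, Matrix.mul_smul, mul_vecMulVec,
    mulVec_mulVec, mul_nonsing_inv K hK, one_mulVec]

end InverseDowndate

lemma isMoorePenrose_inverseDowndate {n : ℕ} {K : Matrix (Fin n) (Fin n) ℝ} {e : Fin n → ℝ}
    (hK : Kᵀ = K) (hdet : IsUnit K.det) (he : e ⬝ᵥ e = 1) (hκ : e ⬝ᵥ K⁻¹ *ᵥ e ≠ 0) :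
    IsMoorePenrose ((1 - vecMulVec e e) * K * (1 - vecMulVec e e)) (inverseDowndate K e) := by
  set E : Matrix (Fin n) (Fin n) ℝ := 1 - vecMulVec e e
  set Q := inverseDowndate K e
  have hQ : Qᵀ = Q := transpose_inverseDowndate hK
  have hE : Eᵀ = E := by rw [transpose_sub, transpose_one, transpose_vecMulVec]
  have hEe : E *ᵥ e = 0 := by
    rw [sub_mulVec, one_mulVec, vecMulVec_mulVec, he, MulOpposite.op_one, one_smul, sub_self]
  have hQE : Q * E = Q := by
    rw [Matrix.mul_sub, Matrix.mul_one, mul_vecMulVec, inverseDowndate_mulVec_self hκ,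
      zero_vecMulVec, sub_zero]
  have hEQ : E * Q = Q :=
    calc E * Q = (Q * E)ᵀ := by rw [transpose_mul, hE, hQ]
      _ = Q := by rw [hQE, hQ]
  refine isMoorePenrose_of_mul_eq ?_ hQ hE ?_ ?_ hEQ
  · rw [transpose_mul, transpose_mul, hE, hK, Matrix.mul_assoc]
  · calc E * K * E * Q = E * (K * Q) := by rw [Matrix.mul_assoc, hEQ, Matrix.mul_assoc]
      _ = E := by
        rw [mul_inverseDowndate hdet, Matrix.mul_sub, Matrix.mul_one, Matrix.mul_smul,
          mul_vecMulVec, hEe, zero_vecMulVec, smul_zero, sub_zero]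
  · rw [← Matrix.mul_assoc, ← Matrix.mul_assoc, Matrix.mul_sub E 1, Matrix.mul_one, mul_vecMulVec,
      hEe, zero_vecMulVec, sub_zero]

lemma mulVec_update_zero_of_mulVec_single {ι R : Type*} [Fintype ι] [DecidableEq ι] [CommRing R]
    {M : Matrix ι ι R} {i : ι} (hM : M *ᵥ Pi.single i 1 = 0) (y : ι → R) :
    M *ᵥ Function.update y i 0 = M *ᵥ y := by
  rw [Pi.update_eq_sub_add_single, Pi.single_zero, add_zero, mulVec_sub, ← mul_one (y i),
    ← smul_eq_mul, Pi.single_smul', mulVec_smul, hM, smul_zero, sub_zero]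

section ZeroRowCol

variable {ι α : Type*} [DecidableEq ι]

def zeroRowCol [Zero α] (K : Matrix ι ι α) (i : ι) : Matrix ι ι α :=
  of fun j k => if j = i ∨ k = i then 0 else K j k

lemma zeroRowCol_eq_mul [Fintype ι] [CommRing α] (K : Matrix ι ι α) (i : ι) :
    zeroRowCol K i = (1 - vecMulVec (Pi.single i 1) (Pi.single i 1)) * K *
      (1 - vecMulVec (Pi.single i 1) (Pi.single i 1)) := by
  have hE : (1 : Matrix ι ι α) - vecMulVec (Pi.single i 1) (Pi.single i 1)
      = diagonal fun j => if j = i then 0 else 1 := by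
    ext j k
    by_cases hjk : j = k <;> by_cases hj : j = i <;> simp_all [one_apply, vecMulVec_apply]
  ext j k
  by_cases hj : j = i <;> by_cases hk : k = i <;> simp [zeroRowCol, hE, hj, hk]

end ZeroRowCol

lemma Matrix.PosDef.isMoorePenrose_zeroRowCol {n : ℕ} {K : Matrix (Fin n) (Fin n) ℝ}
    (hK : K.PosDef) (i : Fin n) :
    IsMoorePenrose (zeroRowCol K i) (inverseDowndate K (Pi.single i 1)) := by
  rw [zeroRowCol_eq_mul]
  refine isMoorePenrose_inverseDowndate ?_ ((isUnit_iff_isUnit_det K).mp hK.isUnit) (by simp) ?_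
  · simpa using hK.isHermitian.eq
  · rw [single_one_dotProduct, mulVec_single_one, col_apply]
    exact hK.inv.diag_pos.ne'

lemma Matrix.PosDef.inv_mulVec_sub_mulVec_update {n : ℕ} {K P : Matrix (Fin n) (Fin n) ℝ}
    (hK : K.PosDef) {i : Fin n} (hP : IsMoorePenrose (zeroRowCol K i) P) (y : Fin n → ℝ) :
    K⁻¹ *ᵥ y - P *ᵥ Function.update y i 0
      = ((K⁻¹ i i)⁻¹ * (K⁻¹ *ᵥ Pi.single i 1 ⬝ᵥ y)) • (K⁻¹ *ᵥ Pi.single i 1) := by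
  have hκ : Pi.single i 1 ⬝ᵥ K⁻¹ *ᵥ Pi.single i 1 = K⁻¹ i i := by
    rw [single_one_dotProduct, mulVec_single_one, col_apply]
  rw [← hκ, ← sub_inverseDowndate_mulVec, hP.unique_s16 (hK.isMoorePenrose_zeroRowCol i),
    mulVec_update_zero_of_mulVec_single (inverseDowndate_mulVec_self (hκ ▸ hK.inv.diag_pos.ne'))]

/-- Stability estimate for minimum norm kernel interpolants: with `c_S = K⁻¹y` and
`c_{S_i} = (K_{S_i})^† y_i`,
`‖f_S^† − f_{S_i}^†‖_H = ‖K^{1/2}(c_S − c_{S_i})‖ ≤ ‖K^{1/2}‖_op‖K⁻¹‖_op·cond(K)·‖y‖`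
where `cond(K) = ‖K‖_op‖K⁻¹‖_op`. -/
theorem kernel_min_norm_stability {n : ℕ} (K : Matrix (Fin n) (Fin n) ℝ)
    (hK : K.PosDef) (i : Fin n) (y : Fin n → ℝ)
    (P : Matrix (Fin n) (Fin n) ℝ)
    (hP : IsMoorePenrose
      (Matrix.of fun j k => if j = i ∨ k = i then (0 : ℝ) else K j k) P) :
    let cS : Fin n → ℝ := K⁻¹.mulVec y
    let cSi : Fin n → ℝ := P.mulVec (Function.update y i 0)
    _root_.enorm ((hK.posSemidef.sqrt).mulVec (cS - cSi))
      ≤ opNorm hK.posSemidef.sqrt * opNorm K⁻¹ * (opNorm K * opNorm K⁻¹) * _root_.enorm y := by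
  intro cS cSi
  have hdiff : cS - cSi = _ := hK.inv_mulVec_sub_mulVec_update hP y
  set u := K⁻¹ *ᵥ Pi.single i 1
  have hu : _root_.enorm u ≤ opNorm K⁻¹ := by
    simpa only [enorm_single_one, mul_one] using enorm_mulVec_le K⁻¹ (Pi.single i 1)
  have huy : |u ⬝ᵥ y| ≤ opNorm K⁻¹ * _root_.enorm y :=
    (abs_dotProduct_le_enorm_mul_enorm u y).trans (mul_le_mul_of_nonneg_right hu (enorm_nonneg y))
  have hc : |(K⁻¹ i i)⁻¹ * (u ⬝ᵥ y)| ≤ opNorm K * (opNorm K⁻¹ * _root_.enorm y) := by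
    rw [abs_mul, abs_inv, abs_of_pos hK.inv.diag_pos]
    exact mul_le_mul (hK.inv_inv_apply_le_opNorm i) huy (abs_nonneg _) (opNorm_nonneg K)
  calc _root_.enorm (hK.posSemidef.sqrt *ᵥ (cS - cSi))
      ≤ opNorm hK.posSemidef.sqrt * (|(K⁻¹ i i)⁻¹ * (u ⬝ᵥ y)| * _root_.enorm u) := by
        rw [hdiff, ← enorm_smul_eq_abs_mul]
        exact enorm_mulVec_le _ _
    _ ≤ opNorm hK.posSemidef.sqrt * (opNorm K * (opNorm K⁻¹ * _root_.enorm y) * opNorm K⁻¹) :=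
        mul_le_mul_of_nonneg_left (mul_le_mul hc hu (enorm_nonneg u) ((abs_nonneg _).trans hc))
          (opNorm_nonneg _)
    _ = opNorm hK.posSemidef.sqrt * opNorm K⁻¹ * (opNorm K * opNorm K⁻¹) * _root_.enorm y := by
        ring
end
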